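/- Let f ∈ C[a,b], and let f_{n,N}^α satisfy the self-referential equation f_{n,N}^α(x) = α_i f_{n,N}^α(L_i⁻¹(x)) + S_{N,σ}(f, x) - α_i S_{n,σ}(f, L_i⁻¹(x)) on [x_{i-1}, x_i], with |α|∞ < 1. Then ‖f_{n,N}^α - f‖∞ ≤ (|α|∞/(1-|α|∞)) ω(f, (b-a)/n) + (1/(1-|α|∞)) ω(f, (b-a)/N). -/

import Mathlib

noncomputable def modulus (f : ℝ → ℝ) (a b δ : ℝ) : ℝ :=
  sSup {d : ℝ | ∃ u ∈ Set.Icc a b, ∃ v ∈ Set.Icc a b, |u - v| ≤ δ ∧ d = |f u - f v|}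

noncomputable def nnOp (m : ℝ) (ξ : ℝ → ℝ) (f : ℝ → ℝ) (a b : ℝ) (n : ℕ) (t : ℝ) : ℝ :=
  ∑ k ∈ Finset.range (n + 1),
    f (a + k * ((b - a) / n)) * ξ (2 * m / ((b - a) / n) * (t - (a + k * ((b - a) / n))))

/-!
The neural network operators reproduce `f` up to `ω(f, (b - a)/k)` because the translates
`ξ (· - 2 m j)` are a nonnegative partition of unity, each supported within one grid step of
its node. Subtracting `f` from the self-referential equation on `[x_{i-1}, x_i]` then gives
`|fα - f| (s) ≤ |α_i| |fα - f| (L_i⁻¹ s) + |α_i| ω(f, (b - a)/n) + ω(f, (b - a)/(N + 1))`,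
and at a maximum point of `|fα - f|` on `[a, b]` this inequality can be solved for the maximum.
-/

open Finset Set

lemma bddAbove_modulus_set {f : ℝ → ℝ} {a b : ℝ} (hf : ContinuousOn f (Icc a b)) (δ : ℝ) :
    BddAbove {d : ℝ | ∃ u ∈ Icc a b, ∃ v ∈ Icc a b, |u - v| ≤ δ ∧ d = |f u - f v|} := by
  obtain ⟨C, hC⟩ := isCompact_Icc.exists_bound_of_continuousOn hf
  refine ⟨2 * C, ?_⟩
  rintro d ⟨u, hu, v, hv, -, rfl⟩
  have hu' := hC u hu
  have hv' := hC v hv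
  rw [Real.norm_eq_abs] at hu' hv'
  linarith [abs_sub (f u) (f v)]

lemma abs_sub_le_modulus {f : ℝ → ℝ} {a b δ u v : ℝ} (hf : ContinuousOn f (Icc a b))
    (hu : u ∈ Icc a b) (hv : v ∈ Icc a b) (huv : |u - v| ≤ δ) :
    |f u - f v| ≤ modulus f a b δ :=
  le_csSup (bddAbove_modulus_set hf δ) ⟨u, hu, v, hv, huv, rfl⟩

lemma abs_sub_sum_mul_le {ι : Type*} (s : Finset ι) {w c : ι → ℝ} {y ω : ℝ}
    (hw : ∀ j ∈ s, 0 ≤ w j) (hw1 : ∑ j ∈ s, w j = 1)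
    (hc : ∀ j ∈ s, w j ≠ 0 → |y - c j| ≤ ω) :
    |y - ∑ j ∈ s, c j * w j| ≤ ω := by
  have hrw : y - ∑ j ∈ s, c j * w j = ∑ j ∈ s, (y - c j) * w j := by
    simp only [sub_mul, sum_sub_distrib, ← mul_sum, hw1, mul_one]
  calc |y - ∑ j ∈ s, c j * w j| ≤ ∑ j ∈ s, |y - c j| * w j := by
        rw [hrw]
        refine (abs_sum_le_sum_abs _ _).trans_eq (sum_congr rfl fun j hj => ?_)
        rw [abs_mul, abs_of_nonneg (hw j hj)]
    _ ≤ ∑ j ∈ s, ω * w j := sum_le_sum fun j hj => by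
        rcases eq_or_ne (w j) 0 with h | h
        · simp [h]
        · exact mul_le_mul_of_nonneg_right (hc j hj h) (hw j hj)
    _ = ω := by rw [← mul_sum, hw1, mul_one]

section NeuralNetworkOperator

variable {m : ℝ} {σ ξ : ℝ → ℝ}

lemma bump_nonneg (hm : 0 ≤ m) (hσ : Monotone σ) (hξ : ∀ x, ξ x = σ (x + m) - σ (x - m))
    (y : ℝ) : 0 ≤ ξ y := by
  rw [hξ, sub_nonneg]
  exact hσ (by linarith)

lemma abs_lt_of_bump_ne_zero (hm : 0 ≤ m) (hσ1 : ∀ x, m ≤ x → σ x = 1)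
    (hσ0 : ∀ x, x ≤ -m → σ x = 0) (hξ : ∀ x, ξ x = σ (x + m) - σ (x - m)) {y : ℝ}
    (hy : ξ y ≠ 0) : |y| < 2 * m := by
  contrapose! hy
  rcases le_abs'.mp hy with h | h
  · rw [hξ, hσ0 _ (by linarith), hσ0 _ (by linarith), sub_zero]
  · rw [hξ, hσ1 _ (by linarith), hσ1 _ (by linarith), sub_self]

/-- The sum telescopes: `ξ (u - 2 m j) = σ (u - 2 m j + m) - σ (u - 2 m (j + 1) + m)`. -/
lemma sum_bump_eq_one (hσ1 : ∀ x, m ≤ x → σ x = 1) (hσ0 : ∀ x, x ≤ -m → σ x = 0)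
    (hξ : ∀ x, ξ x = σ (x + m) - σ (x - m)) (k : ℕ) {u : ℝ} (hu0 : 0 ≤ u)
    (huk : u ≤ 2 * m * k) : ∑ j ∈ range (k + 1), ξ (u - 2 * m * j) = 1 := by
  set g : ℕ → ℝ := fun j => σ (u - 2 * m * j + m)
  have hterm : ∀ j : ℕ, ξ (u - 2 * m * j) = g j - g (j + 1) := fun j => by
    simp only [g, hξ, Nat.cast_succ]
    ring_nf
  rw [sum_congr rfl fun j _ => hterm j, sum_range_sub', sub_eq_self.mpr]
  · simp only [g]
    exact hσ1 _ (by simp; linarith)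
  · simp only [g]
    exact hσ0 _ (by push_cast; linarith)

lemma abs_sub_nnOp_le (hm : 0 < m) (hσ : Monotone σ)
    (hσ1 : ∀ x, m ≤ x → σ x = 1) (hσ0 : ∀ x, x ≤ -m → σ x = 0)
    (hξ : ∀ x, ξ x = σ (x + m) - σ (x - m)) {a b : ℝ} (hab : a < b) {f : ℝ → ℝ}
    (hf : ContinuousOn f (Icc a b)) {k : ℕ} (hk : 0 < k) {t : ℝ} (ht : t ∈ Icc a b) :
    |f t - nnOp m ξ f a b k t| ≤ modulus f a b ((b - a) / k) := by
  set h := (b - a) / k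
  have hk' : (0 : ℝ) < k := Nat.cast_pos.mpr hk
  have hh : 0 < h := div_pos (sub_pos.mpr hab) hk'
  have hkh : k * h = b - a := mul_div_cancel₀ _ hk'.ne'
  set u := 2 * m / h * (t - a)
  have harg : ∀ j : ℕ, 2 * m / h * (t - (a + j * h)) = u - 2 * m * j := fun j => by
    simp only [u]
    field_simp
    ring
  have hu0 : 0 ≤ u := mul_nonneg (by positivity) (sub_nonneg.mpr ht.1)
  have huk : u ≤ 2 * m * k := by
    calc u ≤ 2 * m / h * (b - a) :=
          mul_le_mul_of_nonneg_left (by linarith [ht.2]) (by positivity)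
      _ = 2 * m * k := by rw [← hkh]; field_simp
  change |f t - ∑ j ∈ range (k + 1), f (a + j * h) * ξ (2 * m / h * (t - (a + j * h)))| ≤ _
  simp only [harg]
  refine abs_sub_sum_mul_le _ (fun j _ => bump_nonneg hm.le hσ hξ _)
    (sum_bump_eq_one hσ1 hσ0 hξ k hu0 huk) fun j hj hne => ?_
  have hjk : (j : ℝ) ≤ k := by exact_mod_cast Nat.lt_succ_iff.mp (mem_range.mp hj)
  have hnode : a + j * h ∈ Icc a b :=
    ⟨by nlinarith [hh.le], by nlinarith [mul_le_mul_of_nonneg_right hjk hh.le]⟩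
  have hclose := abs_lt_of_bump_ne_zero hm.le hσ1 hσ0 hξ hne
  rw [← harg, abs_mul, abs_of_pos (by positivity), div_mul_eq_mul_div, div_lt_iff₀ hh]
    at hclose
  exact abs_sub_le_modulus hf ht hnode (by nlinarith [abs_nonneg (t - (a + j * h))])

end NeuralNetworkOperator

lemma exists_mem_Icc_uniform_grid {a h s : ℝ} (hh : 0 < h) {N : ℕ}
    (hs : s ∈ Icc a (a + (N + 1) * h)) :
    ∃ i : Fin (N + 1), s ∈ Icc (a + (i : ℕ) * h) (a + ((i : ℕ) + 1) * h) := by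
  set τ := (s - a) / h
  have hτ0 : 0 ≤ τ := div_nonneg (sub_nonneg.mpr hs.1) hh.le
  have hτN : τ ≤ N + 1 := by
    rw [div_le_iff₀ hh]
    linarith [hs.2]
  have hsτ : s = a + τ * h := by
    simp only [τ]
    field_simp
    ring
  set j := min ⌊τ⌋₊ N
  have hlo : (j : ℝ) ≤ τ := (Nat.cast_le.mpr (min_le_left _ _)).trans (Nat.floor_le hτ0)
  have hhi : τ ≤ j + 1 := by
    rcases le_total ⌊τ⌋₊ N with hc | hc
    · rw [show j = ⌊τ⌋₊ from min_eq_left hc]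
      exact (Nat.lt_floor_add_one τ).le
    · rwa [show j = N from min_eq_right hc]
  refine ⟨⟨j, by omega⟩, ?_, ?_⟩
  · linarith [mul_le_mul_of_nonneg_right hlo hh.le]
  · linarith [mul_le_mul_of_nonneg_right hhi hh.le]

lemma rescale_mem_Icc {a b c s M : ℝ} (hM : 0 < M) (hs : s ∈ Icc c (c + (b - a) / M)) :
    (s - c) * M + a ∈ Icc a b := by
  have h₀ : 0 ≤ s - c := sub_nonneg.mpr hs.1
  have h₁ : (s - c) * M ≤ b - a := by
    rw [← le_div_iff₀ hM]
    linarith [hs.2]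
  constructor <;> nlinarith

lemma IsCompact.le_div_one_sub_of_le_mul_add {X : Type*} [TopologicalSpace X] {K : Set X}
    (hK : IsCompact K) {φ : X → ℝ} (hφ : ContinuousOn φ K) {κ c : ℝ} (hκ0 : 0 ≤ κ)
    (hκ1 : κ < 1) (hself : ∀ s ∈ K, ∃ s' ∈ K, φ s ≤ κ * φ s' + c) {s : X} (hs : s ∈ K) :
    φ s ≤ c / (1 - κ) := by
  obtain ⟨s₀, hs₀, hmax⟩ := hK.exists_isMaxOn ⟨s, hs⟩ hφ
  obtain ⟨s', hs', hle⟩ := hself s₀ hs₀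
  have hs₀le : φ s₀ ≤ κ * φ s₀ + c := hle.trans (by gcongr; exact hmax hs')
  rw [le_div_iff₀ (sub_pos.mpr hκ1)]
  nlinarith [show φ s ≤ φ s₀ from hmax hs]

lemma abs_mul_add_sub_mul_sub_le (α Y G P Q F : ℝ) :
    |α * Y + P - α * Q - F| ≤ |α| * |Y - G| + |α| * |G - Q| + |F - P| := by
  rw [← abs_mul, ← abs_mul]
  calc |α * Y + P - α * Q - F| = |α * (Y - G) + α * (G - Q) - (F - P)| := by ring_nf
    _ ≤ |α * (Y - G) + α * (G - Q)| + |F - P| := abs_sub _ _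
    _ ≤ |α * (Y - G)| + |α * (G - Q)| + |F - P| := by gcongr; exact abs_add_le _ _

/-- Error bound for the discrete neural network α-fractal function (the partition has
`N+1` subintervals of the uniform grid):
`‖f_{n,N}^α - f‖∞ ≤ (|α|∞/(1-|α|∞)) ω(f,(b-a)/n) + (1/(1-|α|∞)) ω(f,(b-a)/(N+1))`. -/
theorem stmt_17 (m : ℝ) (hm : 0 < m) (σ : ℝ → ℝ) (hσ : Monotone σ)
    (hσ1 : ∀ x : ℝ, m ≤ x → σ x = 1) (hσ0 : ∀ x : ℝ, x ≤ -m → σ x = 0)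
    (ξ : ℝ → ℝ) (hξ : ∀ x : ℝ, ξ x = σ (x + m) - σ (x - m))
    (a b : ℝ) (hab : a < b) (N : ℕ)
    (x : Fin (N + 2) → ℝ)
    (hx : ∀ k : Fin (N + 2), x k = a + (k : ℕ) * ((b - a) / (N + 1)))
    (Linv : Fin (N + 1) → ℝ → ℝ)
    (hLinv : ∀ (i : Fin (N + 1)) (s : ℝ), Linv i s = (s - x i.castSucc) * (N + 1) + a)
    (α : Fin (N + 1) → ℝ) (hκ : (⨆ i : Fin (N + 1), |α i|) < 1)
    (n : ℕ) (hn : 0 < n)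
    (f : ℝ → ℝ) (hf : ContinuousOn f (Set.Icc a b))
    (fα : ℝ → ℝ) (hfαc : ContinuousOn fα (Set.Icc a b))
    (hself : ∀ i : Fin (N + 1), ∀ s ∈ Set.Icc (x i.castSucc) (x i.succ),
      fα s = α i * fα (Linv i s) + nnOp m ξ f a b (N + 1) s -
        α i * nnOp m ξ f a b n (Linv i s)) :
    ∀ s ∈ Set.Icc a b,
      |fα s - f s| ≤
        (⨆ i : Fin (N + 1), |α i|) / (1 - ⨆ i : Fin (N + 1), |α i|) *
            modulus f a b ((b - a) / n) +
          1 / (1 - ⨆ i : Fin (N + 1), |α i|) * modulus f a b ((b - a) / (N + 1)) := by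
  set κ := ⨆ i : Fin (N + 1), |α i|
  set ωn := modulus f a b ((b - a) / n)
  set ωN := modulus f a b ((b - a) / (N + 1))
  have hακ : ∀ i, |α i| ≤ κ := le_ciSup (Finite.bddAbove_range _)
  have hκ0 : 0 ≤ κ := (abs_nonneg _).trans (hακ 0)
  have hN : (0 : ℝ) < N + 1 := by positivity
  have hstep : ∀ s ∈ Icc a b, ∃ s' ∈ Icc a b,
      |fα s - f s| ≤ κ * |fα s' - f s'| + (κ * ωn + ωN) := by
    intro s hs
    obtain ⟨i, hi⟩ := exists_mem_Icc_uniform_grid (div_pos (sub_pos.mpr hab) hN) (N := N)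
      (by rwa [mul_div_cancel₀ _ hN.ne', add_sub_cancel])
    have hxc : x i.castSucc = a + (i : ℕ) * ((b - a) / (N + 1)) := by simp [hx]
    have hxs : x i.succ = a + ((i : ℕ) + 1) * ((b - a) / (N + 1)) := by simp [hx]
    rw [← hxc, ← hxs] at hi
    have hxs' : x i.succ = x i.castSucc + (b - a) / (N + 1) := by rw [hxs, hxc]; ring
    have hL : Linv i s ∈ Icc a b := hLinv i s ▸ rescale_mem_Icc hN (hxs' ▸ hi)
    have e₁ := abs_sub_nnOp_le hm hσ hσ1 hσ0 hξ hab hf hn hL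
    have e₂ := abs_sub_nnOp_le hm hσ hσ1 hσ0 hξ hab hf (Nat.succ_pos N) hs
    push_cast at e₂
    refine ⟨Linv i s, hL, ?_⟩
    rw [hself i s hi]
    refine (abs_mul_add_sub_mul_sub_le _ _ (f (Linv i s)) _ _ _).trans ?_
    have := mul_le_mul (hακ i) e₁ (abs_nonneg _) hκ0
    have := mul_le_mul_of_nonneg_right (hακ i) (abs_nonneg (fα (Linv i s) - f (Linv i s)))
    linarith
  intro s hs
  calc |fα s - f s| ≤ (κ * ωn + ωN) / (1 - κ) :=
        isCompact_Icc.le_div_one_sub_of_le_mul_add (hfαc.sub hf).abs hκ0 hκ hstep hs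
    _ = κ / (1 - κ) * ωn + 1 / (1 - κ) * ωN := by ring
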